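/- arXiv:2005.08490 — 2 statements merged into one kernel-verified Lean document; each statement's English description precedes it below -/
import Mathlib

section
/- Let ν > 0, u, v ∈ ℂ with |u| < 1, |v| < 1, and w ∈ ℂ. Define K^ν_{u,v}(z;w) = (ν/(π(1-uv))) exp( (ν/(1-uv)) ( -uv(|z|²+|w|²) + u \overline{z} w + v z \overline{w} ) ). Then ∫_ℂ |K^ν_{u,v}(z;w)|² e^{-ν|z|²} dλ(z) = K^ν_{|u|²,|v|²}(w;w), which is a positive real number. -/
open MeasureTheory ComplexConjugate

noncomputable def Kker (ν : ℝ) (u v z w : ℂ) : ℂ :=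
  ((ν : ℂ) / (Real.pi * (1 - u * v))) *
    Complex.exp (((ν : ℂ) / (1 - u * v)) *
      (-(u * v) * (((‖z‖ : ℝ) : ℂ) ^ 2 + ((‖w‖ : ℝ) : ℂ) ^ 2)
        + u * conj z * w + v * z * conj w))

noncomputable def gaussMeasure (ν : ℝ) : Measure ℂ :=
  volume.withDensity fun z => ENNReal.ofReal (Real.exp (-ν * ‖z‖ ^ 2))

/-!
As a function of `z`, `e^{-ν|z|²} |K^ν_{u,v}(z;w)|²` is the exponential of a real quadratic
polynomial in `z`. Completing the square writes it as
`K^ν_{|u|²,|v|²}(w;w) · (a/π) e^{-a|z - z₀|²}` with `a = ν(1 - |u|²|v|²)/|1 - uv|²`, and the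
normalised Gaussian `(a/π) e^{-a|z - z₀|²}` has integral `1` over `ℂ`.
-/

open Real

noncomputable def KkerDiag (ν x y : ℝ) (w : ℂ) : ℝ :=
  ν / (π * (1 - x * y)) * rexp (ν * (x + y - 2 * x * y) * ‖w‖ ^ 2 / (1 - x * y))

theorem Kker_ofReal_diag (ν x y : ℝ) (w : ℂ) : Kker ν x y w w = KkerDiag ν x y w := by
  have hw : conj w * w = ((‖w‖ : ℝ) : ℂ) ^ 2 := by rw [mul_comm, Complex.mul_conj']
  rw [Kker, KkerDiag, Complex.ofReal_mul, Complex.ofReal_exp]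
  congr 1
  · push_cast; rfl
  · congr 1
    push_cast
    linear_combination (ν / (1 - x * y) * (x + y) : ℂ) * hw

theorem KkerDiag_pos {ν x y : ℝ} (hν : 0 < ν) (hxy : x * y < 1) (w : ℂ) :
    0 < KkerDiag ν x y w :=
  mul_pos (div_pos hν (mul_pos pi_pos (sub_pos.mpr hxy))) (exp_pos _)

theorem integral_gaussMeasure (ν : ℝ) (g : ℂ → ℝ) :
    ∫ z, g z ∂gaussMeasure ν = ∫ z, rexp (-ν * ‖z‖ ^ 2) * g z := by
  have hmeas : Measurable fun z : ℂ => ENNReal.ofReal (rexp (-ν * ‖z‖ ^ 2)) := by fun_prop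
  rw [gaussMeasure, integral_withDensity_eq_integral_toReal_smul hmeas
    (.of_forall fun _ => ENNReal.ofReal_lt_top)]
  simp_rw [ENNReal.toReal_ofReal (exp_pos _).le, smul_eq_mul]

theorem integral_exp_neg_mul_sq_norm_sub {a : ℝ} (ha : 0 < a) (z₀ : ℂ) :
    ∫ z : ℂ, rexp (-a * ‖z - z₀‖ ^ 2) = π / a := by
  rw [integral_sub_right_eq_self (fun z : ℂ => rexp (-a * ‖z‖ ^ 2)) z₀,
    GaussianFourier.integral_rexp_neg_mul_sq_norm ha]
  simp

theorem Kker_exponent_complete_square (ν : ℝ) (u v z w : ℂ) (hD : 1 - u * v ≠ 0)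
    (hm : 1 - ‖u‖ ^ 2 * ‖v‖ ^ 2 ≠ 0) :
    -ν * ‖z‖ ^ 2 + 2 * ((ν / (1 - u * v)) * (-(u * v) * (((‖z‖ : ℝ) : ℂ) ^ 2 + ((‖w‖ : ℝ) : ℂ) ^ 2)
        + u * conj z * w + v * z * conj w)).re
      = ν * (‖u‖ ^ 2 + ‖v‖ ^ 2 - 2 * ‖u‖ ^ 2 * ‖v‖ ^ 2) * ‖w‖ ^ 2 / (1 - ‖u‖ ^ 2 * ‖v‖ ^ 2)
        - ν * (1 - ‖u‖ ^ 2 * ‖v‖ ^ 2) / ‖1 - u * v‖ ^ 2 *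
          ‖z - w * (conj (1 - u * v) * u + (1 - u * v) * conj v)
            / ((1 - ‖u‖ ^ 2 * ‖v‖ ^ 2 : ℝ) : ℂ)‖ ^ 2 := by
  -- Writing `re X = (X + conj X) / 2` and `‖z‖ ^ 2 = z * conj z`, this becomes a rational identity
  -- in `u, v, z, w` and their conjugates, which are independent atoms for `ring`.
  have hD' : 1 - conj u * conj v ≠ 0 := by
    simpa using (map_ne_zero (starRingEnd ℂ)).mpr hD
  replace hm := Complex.ofReal_ne_zero.mpr hm
  apply Complex.ofReal_injective
  push_cast at hm ⊢
  simp only [Complex.re_eq_add_conj, ← Complex.mul_conj', map_mul, map_add, map_sub, map_div₀,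
    map_neg, Complex.conj_ofReal, map_one, Complex.conj_conj] at hm ⊢
  have hm' : 1 - u * v * conj u * conj v ≠ 0 := by convert hm using 2; ring
  field_simp
  ring

theorem exp_neg_mul_sq_norm_mul_sq_norm_Kker (ν : ℝ) (u v z w : ℂ) (hD : 1 - u * v ≠ 0)
    (hm : 1 - ‖u‖ ^ 2 * ‖v‖ ^ 2 ≠ 0) :
    rexp (-ν * ‖z‖ ^ 2) * ‖Kker ν u v z w‖ ^ 2
      = KkerDiag ν (‖u‖ ^ 2) (‖v‖ ^ 2) w *
        (ν * (1 - ‖u‖ ^ 2 * ‖v‖ ^ 2) / ‖1 - u * v‖ ^ 2 / π *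
          rexp (-(ν * (1 - ‖u‖ ^ 2 * ‖v‖ ^ 2) / ‖1 - u * v‖ ^ 2) *
            ‖z - w * (conj (1 - u * v) * u + (1 - u * v) * conj v)
              / ((1 - ‖u‖ ^ 2 * ‖v‖ ^ 2 : ℝ) : ℂ)‖ ^ 2)) := by
  have hprefactor : ‖(ν : ℂ) / (π * (1 - u * v))‖ ^ 2 = ν ^ 2 / (π ^ 2 * ‖1 - u * v‖ ^ 2) := by
    rw [norm_div, norm_mul, Complex.norm_real, Complex.norm_real, Real.norm_of_nonneg pi_pos.le,
      div_pow, mul_pow, Real.norm_eq_abs, sq_abs]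
  have hexp : ∀ x : ℝ, rexp x ^ 2 = rexp (2 * x) := fun x => by rw [← exp_nat_mul]; norm_num
  rw [Kker, norm_mul, Complex.norm_exp, mul_pow, hprefactor, hexp, KkerDiag,
    mul_left_comm, ← exp_add, Kker_exponent_complete_square ν u v z w hD hm, exp_sub, neg_mul,
    exp_neg]
  field_simp

theorem stmt7 (ν : ℝ) (hν : 0 < ν) (u v w : ℂ)
    (hu : ‖u‖ < 1) (hv : ‖v‖ < 1) :
    ((∫ z, ‖Kker ν u v z w‖ ^ 2 ∂gaussMeasure ν : ℝ) : ℂ) =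
      Kker ν (((‖u‖ : ℝ) : ℂ) ^ 2) (((‖v‖ : ℝ) : ℂ) ^ 2) w w ∧
    0 < ∫ z, ‖Kker ν u v z w‖ ^ 2 ∂gaussMeasure ν := by
  have huv₁ : ‖u * v‖ < 1 := by
    rw [norm_mul]
    exact mul_lt_one_of_nonneg_of_lt_one_left (norm_nonneg u) hu hv.le
  have huv : ‖u‖ ^ 2 * ‖v‖ ^ 2 < 1 := by
    rw [← mul_pow, ← norm_mul]
    exact pow_lt_one₀ (norm_nonneg _) huv₁ two_ne_zero
  have hD : 1 - u * v ≠ 0 := sub_ne_zero.mpr fun h => by simp [← h] at huv₁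
  have ha : 0 < ν * (1 - ‖u‖ ^ 2 * ‖v‖ ^ 2) / ‖1 - u * v‖ ^ 2 := by
    have := norm_pos_iff.mpr hD
    have := sub_pos.mpr huv
    positivity
  have hint : ∫ z, ‖Kker ν u v z w‖ ^ 2 ∂gaussMeasure ν = KkerDiag ν (‖u‖ ^ 2) (‖v‖ ^ 2) w := by
    simp_rw [integral_gaussMeasure,
      exp_neg_mul_sq_norm_mul_sq_norm_Kker ν u v _ w hD (sub_pos.mpr huv).ne', integral_const_mul,
      integral_exp_neg_mul_sq_norm_sub ha]
    rw [div_mul_div_comm, mul_comm _ π, div_self (mul_pos pi_pos ha).ne', mul_one]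
  rw [← Complex.ofReal_pow, ← Complex.ofReal_pow, Kker_ofReal_diag, hint]
  exact ⟨rfl, KkerDiag_pos hν huv w⟩
end

section
/- For |t| < 1 and real x, y, the Mehler formula holds: ∑_{n=0}^∞ t^n H_n(x) H_n(y) / (2^n n!) = (1 - t²)^{-1/2} exp( ( -t²(x² + y²) + 2 t x y ) / (1 - t²) ), where H_n is the n-th physicists' Hermite polynomial. -/
noncomputable def physHermite (n : ℕ) (x : ℝ) : ℝ :=
  (-1 : ℝ) ^ n * Real.exp (x ^ 2) * iteratedDeriv n (fun y => Real.exp (-y ^ 2)) x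

/-!
The Gaussian is its own Fourier transform, `e^{-x²} = π^{-1/2} ∫ e^{-s² + 2isx} ds`, so
differentiating under the integral sign gives
`H_n(x) = (-1)^n e^{x²} π^{-1/2} ∫ (2is)^n e^{-s² + 2isx} ds`.
Inserting this for `H_n(x)` and `H_n(y)`, the series becomes the exponential series
`∑ (-2tsu)^n / n! = e^{-2tsu}` inside a double integral over `(s, u) ∈ ℝ²`; for `|t| < 1` it is
dominated by `e^{-(1 - |t|)(s² + u²)}`, since `2|tsu| ≤ |t|(s² + u²)`. What remains is a Gaussian
integral over `ℝ²`, computed by integrating out one variable at a time.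
-/

open MeasureTheory Complex Real

theorem integrable_pow_mul_exp_neg_mul_sq {b : ℝ} (hb : 0 < b) (n : ℕ) :
    Integrable fun x : ℝ => x ^ n * rexp (-b * x ^ 2) := by
  simpa [rpow_natCast] using
    integrable_rpow_mul_exp_neg_mul_sq hb (s := n) (by linarith [n.cast_nonneg (α := ℝ)])

theorem integral_cexp_neg_mul_sq_add {a : ℝ} (ha : 0 < a) (c d : ℂ) :
    ∫ s : ℝ, cexp (-a * s ^ 2 + c * s + d) = √(π / a) * cexp (d + c ^ 2 / (4 * a)) := by
  rw [integral_cexp_quadratic (by simpa using ha), neg_neg, ← ofReal_div,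
    show (1 / 2 : ℂ) = ((1 / 2 : ℝ) : ℂ) by norm_num, ← ofReal_cpow (by positivity),
    ← sqrt_eq_rpow]
  congr 2
  field_simp
  ring

theorem iteratedDeriv_eq_of_hasDerivAt_succ {𝕜 E : Type*} [NontriviallyNormedField 𝕜]
    [NormedAddCommGroup E] [NormedSpace 𝕜 E] {F : ℕ → 𝕜 → E}
    (hF : ∀ n x, HasDerivAt (F n) (F (n + 1) x) x) (n : ℕ) :
    iteratedDeriv n (F 0) = F n := by
  induction n with
  | zero => exact iteratedDeriv_zero
  | succ n ih => ext x; rw [iteratedDeriv_succ, ih, (hF n x).deriv]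

theorem ofReal_iteratedDeriv {f : ℝ → ℝ} {n : WithTop ℕ∞} {x : ℝ} (hf : ContDiffAt ℝ n f x)
    {i : ℕ} (hi : i ≤ n) :
    ((iteratedDeriv i f x : ℝ) : ℂ) = iteratedDeriv i (fun y => (f y : ℂ)) x := by
  simp only [iteratedDeriv_eq_iteratedFDeriv]
  rw [show (fun y => (f y : ℂ)) = ofRealCLM ∘ f from rfl, ofRealCLM.iteratedFDeriv_comp_left hf hi]
  rfl

noncomputable def gaussianDerivIntegral (n : ℕ) (x : ℝ) : ℂ :=
  ∫ s : ℝ, (2 * I * s) ^ n * cexp (-s ^ 2 + 2 * I * s * x)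

theorem norm_cexp_neg_sq_add_mul_I (s x : ℝ) : ‖cexp (-s ^ 2 + 2 * I * s * x)‖ = rexp (-s ^ 2) := by
  rw [norm_exp]
  congr 1
  simp [← ofReal_pow]

theorem integrable_gaussianDerivIntegral_integrand (n : ℕ) (x : ℝ) :
    Integrable fun s : ℝ => (2 * I * s) ^ n * cexp (-s ^ 2 + 2 * I * s * x) := by
  refine ((integrable_pow_mul_exp_neg_mul_sq one_pos n).const_mul (2 ^ n)).norm.mono'
    (by fun_prop) (.of_forall fun s => le_of_eq ?_)
  rw [norm_mul, norm_pow, norm_cexp_neg_sq_add_mul_I]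
  simp [mul_pow, mul_assoc]

theorem hasDerivAt_gaussianDerivIntegral (n : ℕ) (x : ℝ) :
    HasDerivAt (gaussianDerivIntegral n) (gaussianDerivIntegral (n + 1) x) x := by
  have hderiv (s y : ℝ) : HasDerivAt (fun y : ℝ => (2 * I * s) ^ n * cexp (-s ^ 2 + 2 * I * s * y))
      ((2 * I * s) ^ (n + 1) * cexp (-s ^ 2 + 2 * I * s * y)) y := by
    refine ((((hasDerivAt_id y).ofReal_comp.const_mul (2 * I * s)).const_add
      (-(s : ℂ) ^ 2)).cexp.const_mul ((2 * I * (s : ℂ)) ^ n)).congr_deriv ?_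
    simp only [id, ofReal_one]
    ring
  refine (hasDerivAt_integral_of_dominated_loc_of_deriv_le (s := Set.univ) Filter.univ_mem
    (.of_forall fun y => (integrable_gaussianDerivIntegral_integrand n y).aestronglyMeasurable)
    (integrable_gaussianDerivIntegral_integrand n x)
    (integrable_gaussianDerivIntegral_integrand (n + 1) x).aestronglyMeasurable
    (.of_forall fun s y _ => ?_) (integrable_gaussianDerivIntegral_integrand (n + 1) 0).norm
    (.of_forall fun s y _ => hderiv s y)).2
  simp only [norm_mul, norm_cexp_neg_sq_add_mul_I, le_refl]

theorem gaussianDerivIntegral_zero (x : ℝ) :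
    gaussianDerivIntegral 0 x = √π * cexp (-x ^ 2) := by
  have h (s : ℝ) : (2 * I * s) ^ 0 * cexp (-s ^ 2 + 2 * I * s * x)
      = cexp (-(1 : ℝ) * s ^ 2 + 2 * I * x * s + 0) := by
    push_cast; ring_nf
  simp_rw [gaussianDerivIntegral, h, integral_cexp_neg_mul_sq_add one_pos, div_one, ofReal_one]
  congr 2
  linear_combination (x : ℂ) ^ 2 * I_sq

theorem ofReal_iteratedDeriv_exp_neg_sq (n : ℕ) (x : ℝ) :
    ((iteratedDeriv n (fun y => rexp (-y ^ 2)) x : ℝ) : ℂ) = gaussianDerivIntegral n x / √π := by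
  have hπ : (√π : ℂ) ≠ 0 := ofReal_ne_zero.2 (sqrt_pos.2 pi_pos).ne'
  have h0 : (fun y : ℝ => ((rexp (-y ^ 2) : ℝ) : ℂ)) = fun y => gaussianDerivIntegral 0 y / √π := by
    ext y
    rw [gaussianDerivIntegral_zero, mul_div_cancel_left₀ _ hπ]
    push_cast; rfl
  rw [ofReal_iteratedDeriv (n := ⊤) (by fun_prop) le_top, h0,
    iteratedDeriv_eq_of_hasDerivAt_succ (F := fun n y => gaussianDerivIntegral n y / √π)
      (fun n y => (hasDerivAt_gaussianDerivIntegral n y).div_const _)]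

theorem ofReal_physHermite (n : ℕ) (x : ℝ) :
    (physHermite n x : ℂ) = (-1) ^ n * cexp (x ^ 2) * gaussianDerivIntegral n x / √π := by
  rw [physHermite, ofReal_mul, ofReal_mul, ofReal_iteratedDeriv_exp_neg_sq]
  push_cast
  ring

theorem ofReal_physHermite_mul_physHermite (n : ℕ) (x y : ℝ) :
    (physHermite n x * physHermite n y : ℂ)
      = cexp (x ^ 2 + y ^ 2) / π * (gaussianDerivIntegral n x * gaussianDerivIntegral n y) := by
  have hπ : (√π : ℂ) * √π = π := by rw [← ofReal_mul, mul_self_sqrt pi_pos.le]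
  have hsign : ((-1 : ℂ) ^ n) ^ 2 = 1 := by rw [← pow_mul, pow_mul', neg_one_sq, one_pow]
  rw [ofReal_physHermite, ofReal_physHermite, Complex.exp_add, ← hπ]
  field_simp
  linear_combination (gaussianDerivIntegral n x * gaussianDerivIntegral n y) * hsign

theorem integrable_exp_neg_sq_add_two_mul_abs {t : ℝ} (ht : |t| < 1) :
    Integrable fun p : ℝ × ℝ => rexp (-p.1 ^ 2 - p.2 ^ 2 + 2 * |t * p.1 * p.2|) := by
  have hb : 0 < 1 - |t| := by linarith
  refine ((integrable_exp_neg_mul_sq hb).mul_prod (integrable_exp_neg_mul_sq hb)).mono'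
    (by fun_prop) (.of_forall fun p => ?_)
  rw [norm_of_nonneg (exp_pos _).le, ← Real.exp_add, exp_le_exp, abs_mul, abs_mul]
  nlinarith [mul_nonneg (abs_nonneg t) (sq_nonneg (|p.1| - |p.2|)), sq_abs p.1, sq_abs p.2]

noncomputable def mehlerIntegrand (t x y : ℝ) (p : ℝ × ℝ) : ℂ :=
  cexp (-p.1 ^ 2 - p.2 ^ 2 - 2 * t * p.1 * p.2 + 2 * I * (p.1 * x + p.2 * y))

theorem norm_mehlerIntegrand (t x y : ℝ) (p : ℝ × ℝ) :
    ‖mehlerIntegrand t x y p‖ = rexp (-p.1 ^ 2 - p.2 ^ 2 - 2 * t * p.1 * p.2) := by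
  rw [mehlerIntegrand, norm_exp]
  congr 1
  simp [← ofReal_pow]

theorem integrable_mehlerIntegrand {t : ℝ} (ht : |t| < 1) (x y : ℝ) :
    Integrable (mehlerIntegrand t x y) := by
  refine (integrable_exp_neg_sq_add_two_mul_abs ht).mono'
    (by unfold mehlerIntegrand; fun_prop) (.of_forall fun p => ?_)
  rw [norm_mehlerIntegrand, exp_le_exp]
  linarith [neg_le_abs (t * p.1 * p.2)]

theorem integral_mehlerIntegrand {t : ℝ} (ht : |t| < 1) (x y : ℝ) :
    ∫ p, mehlerIntegrand t x y p
      = π / √(1 - t ^ 2) * cexp ((-x ^ 2 - y ^ 2 + 2 * t * x * y) / (1 - t ^ 2)) := by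
  have h1t : 0 < 1 - t ^ 2 := by nlinarith [sq_abs t, abs_nonneg t]
  have hinner (s : ℝ) : ∫ u, mehlerIntegrand t x y (s, u)
      = √π * cexp (-(1 - t ^ 2 : ℝ) * s ^ 2 + 2 * I * (x - t * y) * s + -y ^ 2) := by
    have h (u : ℝ) : mehlerIntegrand t x y (s, u)
        = cexp (-(1 : ℝ) * u ^ 2 + (2 * I * y - 2 * t * s) * u + (-s ^ 2 + 2 * I * s * x)) := by
      simp only [mehlerIntegrand]; push_cast; ring_nf
    simp_rw [h, integral_cexp_neg_mul_sq_add one_pos, div_one]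
    congr 2
    push_cast
    linear_combination (y : ℂ) ^ 2 * I_sq
  have hsqrt : √π * √(π / (1 - t ^ 2)) = π / √(1 - t ^ 2) := by
    rw [sqrt_div pi_pos.le, ← mul_div_assoc, mul_self_sqrt pi_pos.le]
  have h1t' : (1 - t ^ 2 : ℂ) ≠ 0 := by exact_mod_cast h1t.ne'
  rw [Measure.volume_eq_prod, integral_prod _ (integrable_mehlerIntegrand ht x y)]
  simp_rw [hinner, integral_const_mul, integral_cexp_neg_mul_sq_add h1t, ← mul_assoc,
    ← ofReal_mul, hsqrt]
  push_cast
  congr 2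
  field_simp
  linear_combination 4 * (x - t * y : ℂ) ^ 2 * I_sq

theorem gaussianDerivIntegral_mul_eq_integral (t x y : ℝ) (n : ℕ) :
    (t : ℂ) ^ n / (2 ^ n * n.factorial) * (gaussianDerivIntegral n x * gaussianDerivIntegral n y)
      = ∫ p : ℝ × ℝ, (-2 * t * p.1 * p.2 : ℂ) ^ n / n.factorial *
          cexp (-p.1 ^ 2 - p.2 ^ 2 + 2 * I * (p.1 * x + p.2 * y)) := by
  have hsplit (p : ℝ × ℝ) : (-2 * t * p.1 * p.2 : ℂ) ^ n / n.factorial *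
      cexp (-p.1 ^ 2 - p.2 ^ 2 + 2 * I * (p.1 * x + p.2 * y))
      = (t : ℂ) ^ n / (2 ^ n * n.factorial) *
        ((2 * I * p.1) ^ n * cexp (-p.1 ^ 2 + 2 * I * p.1 * x) *
          ((2 * I * p.2) ^ n * cexp (-p.2 ^ 2 + 2 * I * p.2 * y))) := by
    have hI : (2 * I * p.1) ^ n * (2 * I * p.2) ^ n * t ^ n
        = (-2 * t * p.1 * p.2 : ℂ) ^ n * 2 ^ n := by
      simp only [← mul_pow]
      congr 1
      linear_combination 4 * (t * p.1 * p.2 : ℂ) * I_sq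
    rw [show -(p.1 : ℂ) ^ 2 - p.2 ^ 2 + 2 * I * (p.1 * x + p.2 * y)
      = (-p.1 ^ 2 + 2 * I * p.1 * x) + (-p.2 ^ 2 + 2 * I * p.2 * y) by ring, Complex.exp_add]
    calc _ = (2 * I * p.1) ^ n * (2 * I * p.2) ^ n * t ^ n / (2 ^ n * n.factorial) *
          (cexp (-p.1 ^ 2 + 2 * I * p.1 * x) * cexp (-p.2 ^ 2 + 2 * I * p.2 * y)) := by
          rw [hI]; field_simp
      _ = _ := by ring
  simp_rw [hsplit, integral_const_mul]
  rw [Measure.volume_eq_prod, integral_prod_mul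
    (fun s : ℝ => (2 * I * s) ^ n * cexp (-s ^ 2 + 2 * I * s * x))
    (fun s : ℝ => (2 * I * s) ^ n * cexp (-s ^ 2 + 2 * I * s * y))]
  rfl

theorem hasSum_mul_gaussianDerivIntegral {t : ℝ} (ht : |t| < 1) (x y : ℝ) :
    HasSum (fun n : ℕ => (t : ℂ) ^ n / (2 ^ n * n.factorial) *
        (gaussianDerivIntegral n x * gaussianDerivIntegral n y))
      (∫ p, mehlerIntegrand t x y p) := by
  set g : ℝ × ℝ → ℂ := fun p => cexp (-p.1 ^ 2 - p.2 ^ 2 + 2 * I * (p.1 * x + p.2 * y))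
  have hrexp (r : ℝ) : HasSum (fun n => r ^ n / n.factorial) (rexp r) :=
    Real.exp_eq_exp_ℝ ▸ NormedSpace.expSeries_div_hasSum_exp r
  have hnorm (n : ℕ) (p : ℝ × ℝ) : ‖(-2 * t * p.1 * p.2 : ℂ) ^ n / n.factorial * g p‖
      = (2 * |t * p.1 * p.2|) ^ n / n.factorial * rexp (-p.1 ^ 2 - p.2 ^ 2) := by
    simp [g, norm_exp, abs_mul, ← ofReal_pow, mul_assoc]
  simp_rw [gaussianDerivIntegral_mul_eq_integral]
  refine hasSum_integral_of_dominated_convergence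
    (fun n p => (2 * |t * p.1 * p.2|) ^ n / n.factorial * rexp (-p.1 ^ 2 - p.2 ^ 2))
    (fun n => (by fun_prop : Continuous _).aestronglyMeasurable)
    (fun n => .of_forall fun p => (hnorm n p).le)
    (.of_forall fun p => ((hrexp _).mul_right _).summable) ?_ (.of_forall fun p => ?_)
  · simp_rw [((hrexp _).mul_right _).tsum_eq, ← Real.exp_add]
    convert integrable_exp_neg_sq_add_two_mul_abs ht using 3
    ring
  · rw [show mehlerIntegrand t x y p = cexp (-2 * t * p.1 * p.2) * g p by
      rw [mehlerIntegrand, ← Complex.exp_add]; ring_nf]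
    exact (Complex.exp_eq_exp_ℂ ▸ NormedSpace.expSeries_div_hasSum_exp _).mul_right (g p)

theorem stmt11 (t x y : ℝ) (ht : |t| < 1) :
    (∑' n : ℕ, t ^ n * physHermite n x * physHermite n y / (2 ^ n * Nat.factorial n)) =
      (1 / Real.sqrt (1 - t ^ 2)) *
        Real.exp ((-t ^ 2 * (x ^ 2 + y ^ 2) + 2 * t * x * y) / (1 - t ^ 2)) := by
  have h1t : (1 - t ^ 2 : ℂ) ≠ 0 := by
    exact_mod_cast (show 0 < 1 - t ^ 2 by nlinarith [sq_abs t, abs_nonneg t]).ne'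
  have hterm (n : ℕ) : ((t ^ n * physHermite n x * physHermite n y /
      (2 ^ n * Nat.factorial n) : ℝ) : ℂ) = cexp (x ^ 2 + y ^ 2) / π *
        ((t : ℂ) ^ n / (2 ^ n * n.factorial) *
          (gaussianDerivIntegral n x * gaussianDerivIntegral n y)) := by
    push_cast
    linear_combination
      (t : ℂ) ^ n / (2 ^ n * n.factorial) * ofReal_physHermite_mul_physHermite n x y
  have hvalue : ((1 / √(1 - t ^ 2) *
      rexp ((-t ^ 2 * (x ^ 2 + y ^ 2) + 2 * t * x * y) / (1 - t ^ 2)) : ℝ) : ℂ)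
      = cexp (x ^ 2 + y ^ 2) / π * ∫ p, mehlerIntegrand t x y p := by
    rw [integral_mehlerIntegrand ht]
    push_cast
    field_simp
    rw [← Complex.exp_add]
    congr 2
    field_simp
    ring
  refine (hasSum_ofReal.mp ?_).tsum_eq
  simp_rw [hterm, hvalue]
  exact (hasSum_mul_gaussianDerivIntegral ht x y).mul_left _
end
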